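/- arXiv:math/0306049 — 3 statements merged into one kernel-verified Lean document; each statement's English description precedes it below -/
import Mathlib

section
/- For n ≥ 4 and a fixed triple of distinct i, j, k, the number of subsets S ⊆ {1,...,n} with 1 ∈ S (representatives of cuts) whose cut vector δ(S) satisfies δ(S)_{ij} − δ(S)_{ik} − δ(S)_{jk} = 0 and δ(S) ≠ 0 is exactly 3·2^(n−3) − 1. -/
/-!
`δ(S) = δ(Sᶜ)`, so exactly half of the subsets `S` on which the triangle `i, j, k` is tight
contain `0`. Tightness fails only when `S ∩ {i, j, k}` is `{i, j}` or `{k}`, and each of these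
traces is shared by `2 ^ (n - 3)` subsets. Hence `2 ^ n - 2 · 2 ^ (n - 3)` subsets are tight, half
of them contain `0`, and among those `S = univ` is the only one with `δ(S) = 0`.
-/

/-- The cut (semi)metric of a subset `S ⊆ {1,…,n}`. -/
def cutFn {n : ℕ} (S : Finset (Fin n)) (i j : Fin n) : ℝ :=
  if (i ∈ S) ↔ (j ∈ S) then 0 else 1

open Finset

section Counting

variable {α : Type*} [Fintype α] [DecidableEq α]

theorem card_filter_inter_eq {T u : Finset α} (h : u ⊆ T) :
    #{S : Finset α | S ∩ T = u} = 2 ^ (Fintype.card α - #T) := by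
  rw [← card_compl, ← card_powerset]
  refine card_nbij' (· \ T) (· ∪ u) ?_ ?_ ?_ ?_ <;> intro S <;>
    simp only [coe_powerset, coe_filter, mem_univ, true_and, Set.mem_preimage, Set.mem_powerset_iff,
      coe_compl, Set.mem_ofPred_eq, Set.subset_def, Set.mem_compl_iff, mem_coe, Finset.ext_iff] <;>
    grind

theorem card_filter_inter_mem {T : Finset α} {𝒢 : Finset (Finset α)} (h𝒢 : 𝒢 ⊆ T.powerset) :
    #{S : Finset α | S ∩ T ∈ 𝒢} = #𝒢 * 2 ^ (Fintype.card α - #T) := by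
  rw [card_eq_sum_card_fiberwise (f := (· ∩ T)) (t := 𝒢) (fun S hS => by simpa using hS),
    ← smul_eq_mul, ← sum_const]
  refine sum_congr rfl fun u hu => ?_
  rw [filter_filter, ← card_filter_inter_eq (mem_powerset.1 (h𝒢 hu))]
  exact congrArg card (filter_congr fun S _ => and_iff_right_of_imp fun h => h ▸ hu)

theorem card_filter_mem_and_mul_two {P : Finset α → Prop} [DecidablePred P]
    (hP : ∀ S, P Sᶜ ↔ P S) (a : α) :
    #{S : Finset α | a ∈ S ∧ P S} * 2 = #{S : Finset α | P S} := by
  have hcompl : #{S : Finset α | a ∈ S ∧ P S} = #{S : Finset α | a ∉ S ∧ P S} := by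
    refine card_nbij' compl compl ?_ ?_ ?_ ?_ <;> intro S <;> simp [hP]
  rw [mul_two]
  nth_rw 2 [hcompl]
  rw [← card_filter_add_card_filter_not (s := {S : Finset α | P S}) (a ∈ ·), filter_filter,
    filter_filter]
  simp only [and_comm]

end Counting

section Cuts

variable {n : ℕ}

theorem cutFn_compl (S : Finset (Fin n)) : cutFn Sᶜ = cutFn S := by
  ext i j
  simp [cutFn, not_iff_not]

theorem cutFn_eq_zero_iff_of_mem {S : Finset (Fin n)} {a : Fin n} (ha : a ∈ S) :
    cutFn S = 0 ↔ S = univ := by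
  refine ⟨fun h => eq_univ_of_forall fun x => ?_, by rintro rfl; ext; simp [cutFn]⟩
  have hax := congrFun (congrFun h a) x
  simp only [cutFn, Pi.zero_apply, ite_eq_left_iff, one_ne_zero, imp_false, not_not] at hax
  exact hax.1 ha

theorem cutFn_sub_sub_eq_zero_iff (S : Finset (Fin n)) (i j k : Fin n) :
    cutFn S i j - cutFn S i k - cutFn S j k = 0 ↔ ((i ∈ S ↔ j ∈ S) → (k ∈ S ↔ i ∈ S)) := by
  unfold cutFn
  split_ifs <;> norm_num <;> tauto

theorem cutFn_sub_sub_ne_zero_iff_inter_mem {i j k : Fin n} (hik : i ≠ k) (hjk : j ≠ k)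
    (S : Finset (Fin n)) :
    cutFn S i j - cutFn S i k - cutFn S j k ≠ 0 ↔
      S ∩ {i, j, k} ∈ ({{i, j}, {k}} : Finset (Finset (Fin n))) := by
  rw [ne_eq, cutFn_sub_sub_eq_zero_iff]
  simp only [mem_insert, mem_singleton, Finset.ext_iff, mem_inter]
  grind

theorem card_filter_cutFn_sub_sub_ne_zero {i j k : Fin n} (hij : i ≠ j) (hik : i ≠ k)
    (hjk : j ≠ k) :
    #{S : Finset (Fin n) | cutFn S i j - cutFn S i k - cutFn S j k ≠ 0} = 2 * 2 ^ (n - 3) := by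
  have hG : ({{i, j}, {k}} : Finset (Finset (Fin n))) ⊆ ({i, j, k} : Finset (Fin n)).powerset := by
    intro u
    simp only [mem_insert, mem_singleton, mem_powerset]
    rintro (rfl | rfl) <;> grind
  simp only [cutFn_sub_sub_ne_zero_iff_inter_mem hik hjk]
  rw [card_filter_inter_mem hG, card_eq_three.2 ⟨i, j, k, hij, hik, hjk, rfl⟩, Fintype.card_fin,
    card_pair fun h => hik (by simpa using congrArg (i ∈ ·) h)]

theorem card_filter_mem_and_cutFn_sub_sub_eq_zero {i j k : Fin n} (hij : i ≠ j) (hik : i ≠ k)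
    (hjk : j ≠ k) (a : Fin n) :
    #{S : Finset (Fin n) | a ∈ S ∧ cutFn S i j - cutFn S i k - cutFn S j k = 0} =
      3 * 2 ^ (n - 3) := by
  have hn : 3 ≤ n := by
    simpa [card_eq_three.2 ⟨i, j, k, hij, hik, hjk, rfl⟩] using card_le_univ {i, j, k}
  have hhalf := card_filter_mem_and_mul_two
    (P := fun S => cutFn S i j - cutFn S i k - cutFn S j k = 0)
    (fun S => by simp only [cutFn_compl]) a
  have hall := card_filter_add_card_filter_not (s := (univ : Finset (Finset (Fin n))))
    (fun S => cutFn S i j - cutFn S i k - cutFn S j k = 0)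
  rw [card_univ, Fintype.card_finset, Fintype.card_fin,
    card_filter_cutFn_sub_sub_ne_zero hij hik hjk] at hall
  obtain ⟨m, rfl⟩ : ∃ m, n = m + 3 := ⟨n - 3, by omega⟩
  rw [Nat.add_sub_cancel, pow_add] at *
  omega

end Cuts

/-- for `n ≥ 4` and a fixed triple of distinct `i, j, k`, exactly
`3·2^(n−3) − 1` of the nonzero cuts (represented by subsets `S` containing the
first element) satisfy the triangle inequality on `i, j, k` with equality. -/
theorem card_cuts_on_triangle_facet (n : ℕ) (hn : 4 ≤ n)
    (i j k : Fin n) (hij : i ≠ j) (hik : i ≠ k) (hjk : j ≠ k) :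
    {S : Finset (Fin n) |
        (⟨0, by omega⟩ : Fin n) ∈ S ∧
        cutFn S i j - cutFn S i k - cutFn S j k = 0 ∧
        cutFn S ≠ 0}.ncard = 3 * 2 ^ (n - 3) - 1 := by
  have hset : {S : Finset (Fin n) | (⟨0, by omega⟩ : Fin n) ∈ S ∧
        cutFn S i j - cutFn S i k - cutFn S j k = 0 ∧ cutFn S ≠ 0} =
      ↑(({S : Finset (Fin n) | (⟨0, by omega⟩ : Fin n) ∈ S ∧
        cutFn S i j - cutFn S i k - cutFn S j k = 0} : Finset _).erase univ) := by
    ext S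
    simp only [Set.mem_ofPred_eq, coe_erase, coe_filter, mem_univ, true_and, Set.mem_sdiff,
      Set.mem_singleton_iff]
    grind [cutFn_eq_zero_iff_of_mem]
  have huniv : univ ∈ ({S : Finset (Fin n) | (⟨0, by omega⟩ : Fin n) ∈ S ∧
      cutFn S i j - cutFn S i k - cutFn S j k = 0} : Finset _) :=
    mem_filter.2 ⟨mem_univ _, mem_univ _, by simp [cutFn]⟩
  rw [hset, Set.ncard_coe_finset, card_erase_of_mem huniv,
    card_filter_mem_and_cutFn_sub_sub_eq_zero hij hik hjk]
end

section
/- In the graph Γ_n on 3-subsets of {1,...,n}, where two vertices are adjacent iff they intersect in exactly 2 elements, with n ≥ 7: for a fixed vertex v, any two distinct vertices w, w' with |w ∩ v| = |w' ∩ v| = 1 have different sets of neighbours inside the neighbourhood of v. -/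
/-- The graph `Γ_n` on 3-element subsets of `{1,…,n}`, two subsets adjacent
iff their intersection has exactly 2 elements. -/
def Gamma (n : ℕ) : SimpleGraph {A : Finset (Fin n) // A.card = 3} where
  Adj A B := (A.1 ∩ B.1).card = 2
  symm := ⟨fun A B h => by (try dsimp only at h ⊢); rwa [Finset.inter_comm]⟩
  loopless := ⟨fun A h => by (try dsimp only at h); rw [Finset.inter_self, A.2] at h; omega⟩

/-- A common neighbour `u` of `v` and `w` (with `w ∩ v = {x}`) contains `x`. -/
lemma gamma_aux1 {n : ℕ} {v w u : Finset (Fin n)} (hu : u.card = 3)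
    (huv : (u ∩ v).card = 2) (huw : (u ∩ w).card = 2) {x : Fin n}
    (hx : w ∩ v = {x}) : x ∈ u := by
  by_contra hxu
  have hdisj : Disjoint (u ∩ v) (u ∩ w) := by
    rw [Finset.disjoint_left]
    intro a ha hb
    have h1 : a ∈ w ∩ v :=
      Finset.mem_inter.mpr ⟨(Finset.mem_inter.mp hb).2, (Finset.mem_inter.mp ha).2⟩
    rw [hx, Finset.mem_singleton] at h1
    exact hxu (h1 ▸ (Finset.mem_inter.mp ha).1)
  have hcu := Finset.card_union_of_disjoint hdisj
  have hsub : (u ∩ v) ∪ (u ∩ w) ⊆ u :=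
    Finset.union_subset Finset.inter_subset_left Finset.inter_subset_left
  have := Finset.card_le_card hsub
  omega

/-- Construction of common neighbours `{x, y, r}` of `v` and `w`. -/
lemma gamma_mk_common {n : ℕ} (v w : {A : Finset (Fin n) // A.card = 3})
    {x y r : Fin n} (hx : w.1 ∩ v.1 = {x}) (hy : y ∈ v.1) (hyx : y ≠ x)
    (hr : r ∈ w.1) (hrx : r ≠ x) :
    ∃ u : {A : Finset (Fin n) // A.card = 3}, u.1 = {x, y, r} ∧
      u ∈ (Gamma n).commonNeighbors v w := by
  have hxw : x ∈ w.1 := (Finset.mem_inter.mp (hx ▸ Finset.mem_singleton_self x)).1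
  have hxv : x ∈ v.1 := (Finset.mem_inter.mp (hx ▸ Finset.mem_singleton_self x)).2
  have hrv : r ∉ v.1 := fun hrv => hrx (by
    have : r ∈ w.1 ∩ v.1 := Finset.mem_inter.mpr ⟨hr, hrv⟩
    rwa [hx, Finset.mem_singleton] at this)
  have hyw : y ∉ w.1 := fun hyw => hyx (by
    have : y ∈ w.1 ∩ v.1 := Finset.mem_inter.mpr ⟨hyw, hy⟩
    rwa [hx, Finset.mem_singleton] at this)
  have hyr : y ≠ r := fun e => hrv (e ▸ hy)
  have hcard : ({x, y, r} : Finset (Fin n)).card = 3 := by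
    rw [Finset.card_insert_of_notMem (by simp [Ne.symm hyx, Ne.symm hrx]),
        Finset.card_insert_of_notMem (by simp [hyr])]
    rfl
  refine ⟨⟨{x, y, r}, hcard⟩, rfl, ?_⟩
  rw [SimpleGraph.mem_commonNeighbors]
  constructor
  · show (v.1 ∩ {x, y, r}).card = 2
    have hvi : v.1 ∩ {x, y, r} = {x, y} := by
      ext a
      simp only [Finset.mem_inter, Finset.mem_insert, Finset.mem_singleton]
      constructor
      · rintro ⟨hav, rfl | rfl | rfl⟩
        · exact Or.inl rfl
        · exact Or.inr rfl
        · exact absurd hav hrv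
      · rintro (rfl | rfl)
        · exact ⟨hxv, Or.inl rfl⟩
        · exact ⟨hy, Or.inr (Or.inl rfl)⟩
    rw [hvi, Finset.card_insert_of_notMem (by simp [Ne.symm hyx])]
    rfl
  · show (w.1 ∩ {x, y, r}).card = 2
    have hwi : w.1 ∩ {x, y, r} = {x, r} := by
      ext a
      simp only [Finset.mem_inter, Finset.mem_insert, Finset.mem_singleton]
      constructor
      · rintro ⟨haw, rfl | rfl | rfl⟩
        · exact Or.inl rfl
        · exact absurd haw hyw
        · exact Or.inr rfl
      · rintro (rfl | rfl)
        · exact ⟨hxw, Or.inl rfl⟩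
        · exact ⟨hr, Or.inr (Or.inr rfl)⟩
    rw [hwi, Finset.card_insert_of_notMem (by simp [Ne.symm hrx])]
    rfl

/-- Extraction: if `u = {x,y,r}` meets `w'` in two elements and `y ∉ w'`, then `r ∈ w'`. -/
lemma gamma_extract {n : ℕ} {w' u : Finset (Fin n)} {x y r : Fin n}
    (hu : u = {x, y, r}) (hc : (w' ∩ u).card = 2) (hy : y ∉ w') : r ∈ w' := by
  by_contra hr
  have hsub : w' ∩ u ⊆ {x} := by
    intro a ha
    rw [hu] at ha
    simp only [Finset.mem_inter, Finset.mem_insert, Finset.mem_singleton] at ha ⊢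
    rcases ha with ⟨haw, rfl | rfl | rfl⟩
    · rfl
    · exact absurd haw hy
    · exact absurd haw hr
  have := Finset.card_le_card hsub
  simp only [Finset.card_singleton] at this
  omega

/-- for `n ≥ 7`, distinct vertices `w ≠ w'` at distance 2 from a
vertex `v` (i.e. meeting `v` in exactly one element) have different sets of
neighbours inside the neighbourhood of `v`. -/
theorem gamma_distance_two_distinguished (n : ℕ) (hn : 7 ≤ n)
    (v w w' : {A : Finset (Fin n) // A.card = 3})
    (hw : (w.1 ∩ v.1).card = 1) (hw' : (w'.1 ∩ v.1).card = 1) (hne : w ≠ w') :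
    (Gamma n).commonNeighbors v w ≠ (Gamma n).commonNeighbors v w' := by
  intro h
  apply hne
  obtain ⟨x, hx⟩ := Finset.card_eq_one.mp hw
  obtain ⟨x', hx'⟩ := Finset.card_eq_one.mp hw'
  have hxw : x ∈ w.1 := (Finset.mem_inter.mp (hx ▸ Finset.mem_singleton_self x)).1
  have hxv : x ∈ v.1 := (Finset.mem_inter.mp (hx ▸ Finset.mem_singleton_self x)).2
  have hx'w : x' ∈ w'.1 := (Finset.mem_inter.mp (hx' ▸ Finset.mem_singleton_self x')).1
  have hx'v : x' ∈ v.1 := (Finset.mem_inter.mp (hx' ▸ Finset.mem_singleton_self x')).2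
  -- two other elements of v
  have hc1 : (v.1 \ {x}).card = 2 := by
    rw [Finset.card_sdiff_of_subset (Finset.singleton_subset_iff.mpr hxv), v.2]
    rfl
  obtain ⟨y, z, hyz, hvs⟩ := Finset.card_eq_two.mp hc1
  have hy : y ∈ v.1 ∧ y ≠ x := by
    have : y ∈ v.1 \ {x} := hvs ▸ (by simp)
    simpa [Finset.mem_sdiff] using this
  have hz : z ∈ v.1 ∧ z ≠ x := by
    have : z ∈ v.1 \ {x} := hvs ▸ (by simp)
    simpa [Finset.mem_sdiff] using this
  -- two other elements of w
  have hc2 : (w.1 \ {x}).card = 2 := by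
    rw [Finset.card_sdiff_of_subset (Finset.singleton_subset_iff.mpr hxw), w.2]
    rfl
  obtain ⟨p, q, hpq, hws⟩ := Finset.card_eq_two.mp hc2
  have hp : p ∈ w.1 ∧ p ≠ x := by
    have : p ∈ w.1 \ {x} := hws ▸ (by simp)
    simpa [Finset.mem_sdiff] using this
  have hq : q ∈ w.1 ∧ q ≠ x := by
    have : q ∈ w.1 \ {x} := hws ▸ (by simp)
    simpa [Finset.mem_sdiff] using this
  have hpv : p ∉ v.1 := fun hpv => hp.2 (by
    have : p ∈ w.1 ∩ v.1 := Finset.mem_inter.mpr ⟨hp.1, hpv⟩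
    rwa [hx, Finset.mem_singleton] at this)
  -- common neighbours
  obtain ⟨u1, hu1, hm1⟩ := gamma_mk_common v w hx hy.1 hy.2 hp.1 hp.2
  obtain ⟨u2, hu2, hm2⟩ := gamma_mk_common v w hx hz.1 hz.2 hp.1 hp.2
  obtain ⟨u3, hu3, hm3⟩ := gamma_mk_common v w hx hy.1 hy.2 hq.1 hq.2
  rw [h] at hm1 hm2 hm3
  have a1 := (SimpleGraph.mem_commonNeighbors _).mp hm1
  have a2 := (SimpleGraph.mem_commonNeighbors _).mp hm2
  have a3 := (SimpleGraph.mem_commonNeighbors _).mp hm3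
  -- x' belongs to each u i
  have hx'u1 : x' ∈ u1.1 := gamma_aux1 u1.2
    (by rw [Finset.inter_comm]; exact a1.1) (by rw [Finset.inter_comm]; exact a1.2) hx'
  have hx'u2 : x' ∈ u2.1 := gamma_aux1 u2.2
    (by rw [Finset.inter_comm]; exact a2.1) (by rw [Finset.inter_comm]; exact a2.2) hx'
  -- deduce x' = x
  have hx'1 : x' = x ∨ x' = y := by
    rw [hu1] at hx'u1
    simp only [Finset.mem_insert, Finset.mem_singleton] at hx'u1
    rcases hx'u1 with rfl | rfl | rfl
    · exact Or.inl rfl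
    · exact Or.inr rfl
    · exact absurd hx'v hpv
  have hx'2 : x' = x ∨ x' = z := by
    rw [hu2] at hx'u2
    simp only [Finset.mem_insert, Finset.mem_singleton] at hx'u2
    rcases hx'u2 with rfl | rfl | rfl
    · exact Or.inl rfl
    · exact Or.inr rfl
    · exact absurd hx'v hpv
  have hxx : x' = x := by
    rcases hx'1 with h1 | h1
    · exact h1
    · rcases hx'2 with h2 | h2
      · exact h2
      · exact absurd (h1 ▸ h2 ▸ rfl) hyz
  subst hxx
  -- y is not in w'
  have hyw' : y ∉ w'.1 := fun hyw' => hy.2 (by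
    have : y ∈ w'.1 ∩ v.1 := Finset.mem_inter.mpr ⟨hyw', hy.1⟩
    rwa [hx', Finset.mem_singleton] at this)
  -- p, q ∈ w'
  have hpw' : p ∈ w'.1 := gamma_extract hu1 a1.2 hyw'
  have hqw' : q ∈ w'.1 := gamma_extract hu3 a3.2 hyw'
  -- w ⊆ w'
  have hsub : w.1 ⊆ w'.1 := by
    intro a ha
    by_cases hax : a = x'
    · exact hax ▸ hx'w
    · have : a ∈ w.1 \ {x'} := Finset.mem_sdiff.mpr ⟨ha, by simpa using hax⟩
      rw [hws] at this
      simp only [Finset.mem_insert, Finset.mem_singleton] at this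
      rcases this with rfl | rfl
      · exact hpw'
      · exact hqw'
  exact Subtype.ext (Finset.eq_of_subset_of_card_le hsub (by rw [w.2, w'.2]))
end

section
/- For n ≥ 5, if a linear isometry of ℝ^(n choose 2) preserves the metric cone M_n and fixes every triangle facet of M_n (setwise), then it is the identity. -/
/-- The coordinate index set of `ℝ^(n choose 2)`: unordered pairs of distinct
elements of `{1,…,n}`. -/
abbrev NDPair (n : ℕ) := {p : Sym2 (Fin n) // ¬ p.IsDiag}

/-- The coordinate indexed by the pair `{i, j}` for `i ≠ j`. -/
def ndPair {n : ℕ} (i j : Fin n) (h : i ≠ j) : NDPair n :=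
  ⟨s(i, j), by simpa [Sym2.mk_isDiag_iff] using h⟩

/-- The metric cone `M_n ⊆ ℝ^(n choose 2)`, cut out by the triangle
inequalities. -/
def metricConeE (n : ℕ) : Set (EuclideanSpace ℝ (NDPair n)) :=
  {x | ∀ (i j k : Fin n) (hij : i ≠ j) (hik : i ≠ k) (hjk : j ≠ k),
    x (ndPair i j hij) ≤ x (ndPair i k hik) + x (ndPair j k hjk)}

/-- The triangle facet `F(i,j;k) = {x ∈ M_n : x_{ij} = x_{ik} + x_{jk}}`. -/
def triangleFacet (n : ℕ) (i j k : Fin n) (hij : i ≠ j) (hik : i ≠ k)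
    (hjk : j ≠ k) : Set (EuclideanSpace ℝ (NDPair n)) :=
  {x ∈ metricConeE n |
    x (ndPair i j hij) = x (ndPair i k hik) + x (ndPair j k hjk)}

/-!
The cut semimetrics `δ_S` (`cutVec S`) are pinned down, up to a scalar, by the triangle facets
they lie on: for `i, j` on the same side of `S` and any third point `k`, both `F(i,k;j)` and
`F(j,k;i)` contain `δ_S`, and the two equalities `x_ik = x_ij + x_jk`, `x_jk = x_ij + x_ik` force
`x_ij = 0` and `x_ik = x_jk`; hence `x` is constant on the pairs crossing `S`. A linear isometry
fixing every facet therefore sends `δ_S` to a multiple of itself that is nonnegative (it lies in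
`M_n`) and of the same norm, i.e. fixes it, and so fixes every unit vector
`e_ab = (δ_{a} + δ_{b} - δ_{a,b}) / 2`.
-/

section CutSemimetrics

variable {n : ℕ}

theorem ndPair_comm {i j : Fin n} (hij : i ≠ j) : ndPair i j hij = ndPair j i hij.symm :=
  Subtype.ext Sym2.eq_swap

@[elab_as_elim]
theorem NDPair.ind {P : NDPair n → Prop} (h : ∀ i j (hij : i ≠ j), P (ndPair i j hij)) :
    ∀ q, P q := by
  rintro ⟨q, hq⟩
  induction q using Sym2.ind with
  | _ i j => exact h i j (by simpa [Sym2.mk_isDiag_iff] using hq)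

theorem metricConeE_apply_nonneg {x : EuclideanSpace ℝ (NDPair n)} (hx : x ∈ metricConeE n)
    {i j k : Fin n} (hij : i ≠ j) (hik : i ≠ k) (hjk : j ≠ k) : 0 ≤ x (ndPair i j hij) := by
  have h₁ := hx i k j hik hij hjk.symm
  have h₂ := hx j k i hjk hij.symm hik.symm
  rw [← ndPair_comm hjk] at h₁
  rw [← ndPair_comm hij, ← ndPair_comm hik] at h₂
  linarith

noncomputable def cutVec (S : Finset (Fin n)) : EuclideanSpace ℝ (NDPair n) :=
  WithLp.toLp 2 fun q => Sym2.lift ⟨fun i j => if i ∈ S ↔ j ∈ S then 0 else 1,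
    fun _ _ => if_congr iff_comm rfl rfl⟩ q.1

theorem cutVec_apply (S : Finset (Fin n)) {i j : Fin n} (hij : i ≠ j) :
    cutVec S (ndPair i j hij) = if i ∈ S ↔ j ∈ S then 0 else 1 := by
  simp [cutVec, ndPair]

theorem cutVec_mem_metricConeE (S : Finset (Fin n)) : cutVec S ∈ metricConeE n := by
  intro i j k hij hik hjk
  rw [cutVec_apply, cutVec_apply, cutVec_apply]
  by_cases hi : i ∈ S <;> by_cases hj : j ∈ S <;> by_cases hk : k ∈ S <;> simp [hi, hj, hk]

theorem cutVec_mem_triangleFacet (S : Finset (Fin n)) {i j k : Fin n} (hij : i ≠ j)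
    (hik : i ≠ k) (hjk : j ≠ k) (h : (i ∈ S ↔ k ∈ S) ∨ (j ∈ S ↔ k ∈ S)) :
    cutVec S ∈ triangleFacet n i j k hij hik hjk := by
  refine ⟨cutVec_mem_metricConeE S, ?_⟩
  rw [cutVec_apply, cutVec_apply, cutVec_apply]
  by_cases hi : i ∈ S <;> by_cases hj : j ∈ S <;> by_cases hk : k ∈ S <;> simp_all

theorem cutVec_ne_zero {S : Finset (Fin n)} {a b : Fin n} (ha : a ∈ S) (hb : b ∉ S) :
    cutVec S ≠ 0 := by
  intro h
  have := congrArg (· (ndPair a b (ne_of_mem_of_not_mem ha hb))) h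
  simp [cutVec_apply, ha, hb] at this

theorem single_ndPair_eq_cutVec {a b : Fin n} (hab : a ≠ b) :
    PiLp.single 2 (ndPair a b hab) (1 : ℝ) =
      (2⁻¹ : ℝ) • (cutVec {a} + cutVec {b} - cutVec {a, b}) := by
  ext q
  induction q using NDPair.ind with
  | h i j hij =>
    rw [PiLp.single_apply, PiLp.smul_apply, PiLp.sub_apply, PiLp.add_apply, cutVec_apply,
      cutVec_apply, cutVec_apply, if_congr (Subtype.ext_iff.trans Sym2.eq_iff) rfl rfl]
    simp only [Finset.mem_singleton, Finset.mem_insert]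
    by_cases hia : i = a <;> by_cases hib : i = b <;> by_cases hja : j = a <;>
      by_cases hjb : j = b <;> simp_all <;> norm_num

def MemTriangleFacetsOf (y x : EuclideanSpace ℝ (NDPair n)) : Prop :=
  ∀ (i j k : Fin n) (hij : i ≠ j) (hik : i ≠ k) (hjk : j ≠ k),
    y ∈ triangleFacet n i j k hij hik hjk → x ∈ triangleFacet n i j k hij hik hjk

section TightTriangles

variable {S : Finset (Fin n)} {x : EuclideanSpace ℝ (NDPair n)}

theorem apply_eq_zero_and_eq_of_mem_triangleFacet
    (hx : MemTriangleFacetsOf (cutVec S) x)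
    {i j k : Fin n} (hij : i ≠ j) (hik : i ≠ k) (hjk : j ≠ k) (hS : i ∈ S ↔ j ∈ S) :
    x (ndPair i j hij) = 0 ∧ x (ndPair i k hik) = x (ndPair j k hjk) := by
  have h₁ := (hx i k j hik hij hjk.symm (cutVec_mem_triangleFacet S _ _ _ (.inl hS))).2
  have h₂ := (hx j k i hjk hij.symm hik.symm (cutVec_mem_triangleFacet S _ _ _ (.inl hS.symm))).2
  rw [← ndPair_comm hjk] at h₁
  rw [← ndPair_comm hij, ← ndPair_comm hik] at h₂
  constructor <;> linarith

theorem apply_eq_apply_of_mem_triangleFacet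
    (hx : MemTriangleFacetsOf (cutVec S) x)
    {i j k : Fin n} (hik : i ≠ k) (hjk : j ≠ k) (hS : i ∈ S ↔ j ∈ S) :
    x (ndPair i k hik) = x (ndPair j k hjk) := by
  rcases eq_or_ne i j with rfl | hij
  · rfl
  · exact (apply_eq_zero_and_eq_of_mem_triangleFacet hx hij hik hjk hS).2

theorem eq_smul_cutVec_of_mem_triangleFacet (hn : 3 ≤ n)
    (hx : MemTriangleFacetsOf (cutVec S) x)
    {a b : Fin n} (ha : a ∈ S) (hb : b ∉ S) :
    x = x (ndPair a b (ne_of_mem_of_not_mem ha hb)) • cutVec S := by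
  have hcross : ∀ i j (hi : i ∈ S) (hj : j ∉ S),
      x (ndPair i j (ne_of_mem_of_not_mem hi hj)) =
        x (ndPair a b (ne_of_mem_of_not_mem ha hb)) := by
    intro i j hi hj
    rw [apply_eq_apply_of_mem_triangleFacet hx _ (ne_of_mem_of_not_mem ha hj) (iff_of_true hi ha),
      ndPair_comm (ne_of_mem_of_not_mem ha hj), ndPair_comm (ne_of_mem_of_not_mem ha hb),
      apply_eq_apply_of_mem_triangleFacet hx _ _ (iff_of_false hj hb)]
  ext q
  induction q using NDPair.ind with
  | h i j hij =>
    rw [PiLp.smul_apply, cutVec_apply, smul_eq_mul]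
    split_ifs with hS
    · obtain ⟨k, hki, hkj⟩ := Fin.exists_ne_and_ne_of_two_lt i j (by omega)
      rw [mul_zero, (apply_eq_zero_and_eq_of_mem_triangleFacet hx hij hki.symm hkj.symm hS).1]
    · rw [mul_one]
      by_cases hi : i ∈ S
      · exact hcross i j hi (fun hj => hS (iff_of_true hi hj))
      · rw [ndPair_comm]
        exact hcross j i (not_not.mp fun hj => hS (iff_of_false hi hj)) hi

theorem eq_cutVec_of_mem_triangleFacet_of_norm_eq (hn : 3 ≤ n)
    (hx : MemTriangleFacetsOf (cutVec S) x)
    (hnorm : ‖x‖ = ‖cutVec S‖) {a b : Fin n} (ha : a ∈ S) (hb : b ∉ S) :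
    x = cutVec S := by
  have hx_eq := eq_smul_cutVec_of_mem_triangleFacet hn hx ha hb
  set t := x (ndPair a b (ne_of_mem_of_not_mem ha hb))
  obtain ⟨c, hca, hcb⟩ := Fin.exists_ne_and_ne_of_two_lt a b (by omega)
  have hx_cone : x ∈ metricConeE n := (hx a b c (ne_of_mem_of_not_mem ha hb) hca.symm hcb.symm
    (cutVec_mem_triangleFacet S _ _ _ ((em (c ∈ S)).imp (iff_of_true ha) (iff_of_false hb)))).1
  have ht_nonneg : 0 ≤ t := metricConeE_apply_nonneg hx_cone _ hca.symm hcb.symm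
  have ht : t = 1 := by
    rw [hx_eq, norm_smul, Real.norm_of_nonneg ht_nonneg] at hnorm
    exact (mul_eq_right₀ (norm_ne_zero_iff.mpr (cutVec_ne_zero ha hb))).mp hnorm
  rw [hx_eq, ht, one_smul]

end TightTriangles

end CutSemimetrics

theorem isometry_fixing_facets_is_id_general (n : ℕ) (hn : 5 ≤ n)
    (f : EuclideanSpace ℝ (NDPair n) ≃ₗᵢ[ℝ] EuclideanSpace ℝ (NDPair n))
    (hfacets : ∀ (i j k : Fin n) (hij : i ≠ j) (hik : i ≠ k) (hjk : j ≠ k),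
      f '' triangleFacet n i j k hij hik hjk = triangleFacet n i j k hij hik hjk) :
    ∀ x, f x = x := by
  have hcut : ∀ (S : Finset (Fin n)) (a b : Fin n), a ∈ S → b ∉ S →
      f (cutVec S) = cutVec S :=
    fun S a b ha hb => eq_cutVec_of_mem_triangleFacet_of_norm_eq (by omega)
      (fun i j k hij hik hjk hF => hfacets i j k hij hik hjk ▸ Set.mem_image_of_mem f hF)
      (f.norm_map _) ha hb
  have hsingle : ∀ q, f (PiLp.single 2 q 1) = PiLp.single 2 q 1 := by
    intro q
    induction q using NDPair.ind with
    | h a b hab =>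
      obtain ⟨c, hca, hcb⟩ := Fin.exists_ne_and_ne_of_two_lt a b (by omega)
      rw [single_ndPair_eq_cutVec hab, map_smul, map_sub, map_add,
        hcut {a} a b (by simp) (by simpa using hab.symm), hcut {b} b a (by simp) (by simpa),
        hcut {a, b} a c (by simp) (by simp [hca, hcb])]
  have hf : f.toLinearMap = LinearMap.id :=
    (PiLp.basisFun 2 ℝ (NDPair n)).ext fun q => by simpa using hsingle q
  exact fun x => LinearMap.congr_fun hf x

/-- for `n ≥ 5`, a linear isometry of `ℝ^(n choose 2)`
preserving `M_n` and fixing every triangle facet setwise is the identity. -/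
theorem isometry_fixing_facets_is_id (n : ℕ) (hn : 5 ≤ n)
    (f : EuclideanSpace ℝ (NDPair n) ≃ₗᵢ[ℝ] EuclideanSpace ℝ (NDPair n))
    (hcone : f '' metricConeE n = metricConeE n)
    (hfacets : ∀ (i j k : Fin n) (hij : i ≠ j) (hik : i ≠ k) (hjk : j ≠ k),
      f '' triangleFacet n i j k hij hik hjk = triangleFacet n i j k hij hik hjk) :
    ∀ x, f x = x :=
  isometry_fixing_facets_is_id_general n hn f hfacets
end
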